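/- arXiv:1401.6249 — 5 statements merged into one kernel-verified Lean document; each statement's English description precedes it below -/
import Mathlib

section
/- Let G be the 2×2 unitary matrix on C^2 defined by G = |+⟩⟨+| + e^{iθ}|−⟩⟨−|, where |±⟩ = (|0⟩ ± |1⟩)/√2 and e^{iθ} = (3+4i)/5. Then for every integer n, G^n|0⟩ = |0⟩ if and only if n = 0. -/
/-!
|+⟩ and |−⟩ are orthonormal eigenvectors of G with eigenvalues 1 and ζ = (3+4i)/5, so
G^n|0⟩ = (|+⟩ + ζ^n |−⟩)/√2, which is |0⟩ = (|+⟩ + |−⟩)/√2 exactly when ζ^n = 1. And ζ is not a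
root of unity: (3+4i)^n = 5^n in ℤ[i] is impossible for n ≠ 0, because the ring map
ℤ[i] → ℤ/5, i ↦ 2, sends 3+4i to 1 and 5 to 0.
-/

open Matrix Complex

noncomputable def ketPlus : Fin 2 → ℂ := ![(Real.sqrt 2 : ℂ)⁻¹, (Real.sqrt 2 : ℂ)⁻¹]

noncomputable def ketMinus : Fin 2 → ℂ := ![(Real.sqrt 2 : ℂ)⁻¹, -(Real.sqrt 2 : ℂ)⁻¹]

/-- G = |+⟩⟨+| + e^{iθ}|−⟩⟨−| with e^{iθ} = (3+4i)/5. -/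
noncomputable def Gmat : Matrix (Fin 2) (Fin 2) ℂ :=
  Matrix.vecMulVec ketPlus (star ketPlus) +
    (((3 : ℂ) + 4 * Complex.I) / 5) • Matrix.vecMulVec ketMinus (star ketMinus)

theorem pow_ne_pow_of_isUnit_map_of_map_eq_zero {R S : Type*} [Semiring R] [Semiring S]
    [Nontrivial S] (f : R →+* S) {a b : R} (ha : IsUnit (f a)) (hb : f b = 0) {n : ℕ}
    (hn : n ≠ 0) : a ^ n ≠ b ^ n := fun h ↦ by
  have := congrArg f h
  rw [map_pow, map_pow, hb, zero_pow hn] at this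
  exact (ha.pow n).ne_zero this

section Eigenvector

variable {m : Type*} [Fintype m] [DecidableEq m]

theorem Matrix.pow_mulVec_of_mulVec_eq_smul {R : Type*} [CommSemiring R] {A : Matrix m m R}
    {v : m → R} {c : R} (hv : A *ᵥ v = c • v) (k : ℕ) :
    A ^ k *ᵥ v = c ^ k • v := by
  induction k with
  | zero => simp
  | succ k ih => rw [pow_succ, ← mulVec_mulVec, hv, mulVec_smul, ih, smul_smul, pow_succ']

theorem MonoidHom.map_zpow_mulVec_of_mulVec_eq_smul {K G : Type*} [Field K] [Group G]
    {v : m → K} {c : K} (ρ : G →* Matrix m m K) {g : G} (hc : c ≠ 0) (hv : ρ g *ᵥ v = c • v)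
    (n : ℤ) : ρ (g ^ n) *ᵥ v = c ^ n • v := by
  have hinv : ρ g⁻¹ *ᵥ v = c⁻¹ • v := by
    calc ρ g⁻¹ *ᵥ v = c⁻¹ • ρ g⁻¹ *ᵥ ρ g *ᵥ v := by
          rw [hv, mulVec_smul, smul_smul, inv_mul_cancel₀ hc, one_smul]
      _ = c⁻¹ • v := by rw [mulVec_mulVec, ← map_mul, inv_mul_cancel, map_one, one_mulVec]
  obtain ⟨k, rfl | rfl⟩ := Int.eq_nat_or_neg n
  · rw [zpow_natCast, zpow_natCast, map_pow, pow_mulVec_of_mulVec_eq_smul hv]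
  · rw [_root_.zpow_neg, _root_.zpow_neg, zpow_natCast, zpow_natCast, ← inv_pow, map_pow,
      pow_mulVec_of_mulVec_eq_smul hinv, inv_pow]

end Eigenvector

noncomputable def phase : ℂ := (3 + 4 * I) / 5

theorem phase_ne_zero : phase ≠ 0 := by
  norm_num [phase, Complex.ext_iff]

theorem phase_pow_ne_one {n : ℕ} (hn : n ≠ 0) : phase ^ n ≠ 1 := by
  intro h
  rw [phase, div_pow, div_eq_one_iff_eq (pow_ne_zero n (by norm_num))] at h
  have : Fact (1 < 5) := ⟨by norm_num⟩
  let toZMod5 : GaussianInt →+* ZMod 5 := Zsqrtd.lift ⟨2, by decide⟩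
  have h34 : toZMod5 ⟨3, 4⟩ = 1 := by decide
  refine pow_ne_pow_of_isUnit_map_of_map_eq_zero toZMod5 (a := ⟨3, 4⟩) (b := 5)
    (h34 ▸ isUnit_one) (by rw [map_ofNat]; rfl) hn ?_
  apply GaussianInt.toComplex_injective
  simpa [GaussianInt.toComplex_def', map_ofNat] using h

theorem phase_zpow_eq_one_iff (n : ℤ) : phase ^ n = 1 ↔ n = 0 := by
  refine ⟨fun h ↦ ?_, fun h ↦ by rw [h, zpow_zero]⟩
  by_contra hn
  obtain ⟨k, rfl | rfl⟩ := Int.eq_nat_or_neg n <;>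
    simp only [_root_.zpow_neg, inv_eq_one, zpow_natCast] at h <;>
    exact phase_pow_ne_one (by omega) h

theorem inv_sqrt_two_mul_self : (Real.sqrt 2 : ℂ)⁻¹ * (Real.sqrt 2 : ℂ)⁻¹ = 2⁻¹ := by
  rw [← mul_inv, ← ofReal_mul, Real.mul_self_sqrt zero_le_two, ofReal_ofNat]

theorem star_ketPlus_dotProduct_ketPlus : star ketPlus ⬝ᵥ ketPlus = 1 := by
  simp [ketPlus, dotProduct, Fin.sum_univ_two, inv_sqrt_two_mul_self]; norm_num

theorem star_ketMinus_dotProduct_ketMinus : star ketMinus ⬝ᵥ ketMinus = 1 := by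
  simp [ketMinus, dotProduct, Fin.sum_univ_two, inv_sqrt_two_mul_self]; norm_num

theorem star_ketPlus_dotProduct_ketMinus : star ketPlus ⬝ᵥ ketMinus = 0 := by
  simp [ketPlus, ketMinus, dotProduct, Fin.sum_univ_two]

theorem star_ketMinus_dotProduct_ketPlus : star ketMinus ⬝ᵥ ketPlus = 0 := by
  simp [ketPlus, ketMinus, dotProduct, Fin.sum_univ_two]

theorem Gmat_mulVec_ketPlus : Gmat *ᵥ ketPlus = ketPlus := by
  rw [Gmat, add_mulVec, smul_mulVec, vecMulVec_mulVec, vecMulVec_mulVec, op_smul_eq_smul,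
    op_smul_eq_smul, star_ketPlus_dotProduct_ketPlus, star_ketMinus_dotProduct_ketPlus]
  simp

theorem Gmat_mulVec_ketMinus : Gmat *ᵥ ketMinus = phase • ketMinus := by
  rw [Gmat, add_mulVec, smul_mulVec, vecMulVec_mulVec, vecMulVec_mulVec, op_smul_eq_smul,
    op_smul_eq_smul, star_ketPlus_dotProduct_ketMinus, star_ketMinus_dotProduct_ketMinus]
  simp [phase]

theorem ketMinus_ne_zero : ketMinus ≠ 0 := fun h ↦ by
  simpa [ketMinus] using congrFun h 0

theorem ket_zero_eq_smul_add : ![1, 0] = (Real.sqrt 2 : ℂ)⁻¹ • (ketPlus + ketMinus) := by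
  ext i
  fin_cases i
  · simp [ketPlus, ketMinus, ← two_mul, mul_left_comm _ (2 : ℂ), inv_sqrt_two_mul_self]
  · simp [ketPlus, ketMinus]

/-- For every integer n, G^n |0⟩ = |0⟩ if and only if n = 0. -/
theorem stmt_0 (G : Matrix.unitaryGroup (Fin 2) ℂ)
    (hG : (G : Matrix (Fin 2) (Fin 2) ℂ) = Gmat) :
    ∀ n : ℤ, ((G ^ n : Matrix.unitaryGroup (Fin 2) ℂ) : Matrix (Fin 2) (Fin 2) ℂ).mulVec
      ![1, 0] = ![1, 0] ↔ n = 0 := by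
  intro n
  have hplus : ((G ^ n : unitaryGroup (Fin 2) ℂ) : Matrix (Fin 2) (Fin 2) ℂ) *ᵥ ketPlus =
      ketPlus := by
    simpa using (unitaryGroup (Fin 2) ℂ).subtype.map_zpow_mulVec_of_mulVec_eq_smul one_ne_zero
      (by simpa [hG] using Gmat_mulVec_ketPlus) n
  have hminus : ((G ^ n : unitaryGroup (Fin 2) ℂ) : Matrix (Fin 2) (Fin 2) ℂ) *ᵥ ketMinus =
      phase ^ n • ketMinus :=
    (unitaryGroup (Fin 2) ℂ).subtype.map_zpow_mulVec_of_mulVec_eq_smul phase_ne_zero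
      (by simpa [hG] using Gmat_mulVec_ketMinus) n
  have hs : (Real.sqrt 2 : ℂ)⁻¹ ≠ 0 := by simp
  rw [ket_zero_eq_smul_add, mulVec_smul, mulVec_add, hplus, hminus, smul_right_inj hs,
    add_right_inj, ← phase_zpow_eq_one_iff]
  nth_rewrite 2 [← one_smul ℂ ketMinus]
  exact (smul_left_injective ℂ ketMinus_ne_zero).eq_iff
end

section
/- Let H be a finite-dimensional complex inner product space and U a unitary operator on H. There exists a positive integer p such that for every subspace K of H, if U^n K = K for some positive integer n, then U^p K = K. -/
section Aux

variable {H : Type*} [NormedAddCommGroup H] [InnerProductSpace ℂ H] [FiniteDimensional ℂ H]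

local notation "⟪" x ", " y "⟫" => @inner ℂ _ _ x y

private lemma unit_inner_map {V : H →ₗ[ℂ] H} (hV : V ∈ unitary (H →ₗ[ℂ] H)) (x y : H) :
    ⟪V x, V y⟫ = ⟪x, y⟫ := by
  have h := (Unitary.mem_iff.mp hV).1
  have hx : (LinearMap.adjoint V) (V x) = x := by
    rw [← LinearMap.star_eq_adjoint, ← Module.End.mul_apply, h, Module.End.one_apply]
  calc ⟪V x, V y⟫ = ⟪(LinearMap.adjoint V) (V x), y⟫ :=
        (LinearMap.adjoint_inner_left V y (V x)).symm
    _ = ⟪x, y⟫ := by rw [hx]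

private lemma unit_inj {V : H →ₗ[ℂ] H} (hV : V ∈ unitary (H →ₗ[ℂ] H)) :
    Function.Injective V := by
  have h := (Unitary.mem_iff.mp hV).1
  intro x y hxy
  have : (star V * V) x = (star V * V) y := by
    rw [Module.End.mul_apply, Module.End.mul_apply, hxy]
  rwa [h, Module.End.one_apply, Module.End.one_apply] at this

private lemma unit_step {V : H →ₗ[ℂ] H} (hV : V ∈ unitary (H →ₗ[ℂ] H)) {μ : ℂ} {v : H}
    (h : (V - μ • 1) ((V - μ • 1) v) = 0) : (V - μ • 1) v = 0 := by
  set w := (V - μ • 1) v with hw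
  have hwv : w = V v - μ • v := by
    rw [hw, LinearMap.sub_apply, LinearMap.smul_apply, Module.End.one_apply]
  by_cases hw0 : w = 0
  · exact hw0
  have hVw : V w = μ • w := by
    have h' := h
    rw [LinearMap.sub_apply, LinearMap.smul_apply, Module.End.one_apply, sub_eq_zero] at h'
    exact h'
  have hww : ⟪w, w⟫ ≠ 0 := fun hc => hw0 (inner_self_eq_zero.mp hc)
  have hμ : (starRingEnd ℂ) μ * μ = 1 := by
    have h1 := unit_inner_map hV w w
    rw [hVw, inner_smul_left, inner_smul_right, ← mul_assoc] at h1
    have h2 : (starRingEnd ℂ) μ * μ * ⟪w, w⟫ = 1 * ⟪w, w⟫ := by rw [h1, one_mul]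
    exact mul_right_cancel₀ hww h2
  have hμ0 : μ ≠ 0 := by
    rintro rfl; simp at hμ
  have hconj : (starRingEnd ℂ) μ = μ⁻¹ := by
    field_simp
    linear_combination hμ
  have hVinv : V (μ⁻¹ • w) = w := by
    rw [map_smul, hVw, smul_smul, inv_mul_cancel₀ hμ0, one_smul]
  have h1 : ⟪V v, w⟫ = μ⁻¹ * ⟪v, w⟫ := by
    conv_lhs => rw [← hVinv]
    rw [unit_inner_map hV, inner_smul_right]
  have key : ⟪V v - μ • v, w⟫ = 0 := by
    rw [inner_sub_left, inner_smul_left, h1, hconj, sub_self]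
  rw [← hwv] at key
  exact absurd (inner_self_eq_zero.mp key) hw0

private lemma unit_gen_le_eig {V : H →ₗ[ℂ] H} (hV : V ∈ unitary (H →ₗ[ℂ] H)) (μ : ℂ) :
    Module.End.genEigenspace V μ ⊤ ≤ Module.End.eigenspace V μ := by
  have main : ∀ (k : ℕ) (x : H), ((V - μ • 1) ^ k) x = 0 → (V - μ • 1) x = 0 := by
    intro k
    induction k with
    | zero =>
      intro x hx
      rw [pow_zero, Module.End.one_apply] at hx
      rw [hx, map_zero]
    | succ k ih =>
      intro x hx
      rw [pow_succ, Module.End.mul_apply] at hx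
      exact unit_step hV (ih _ hx)
  intro x hx
  obtain ⟨k, hk⟩ := Module.End.mem_genEigenspace_top.mp hx
  rw [LinearMap.mem_ker] at hk
  have := main k x hk
  rw [LinearMap.sub_apply, LinearMap.smul_apply, Module.End.one_apply, sub_eq_zero] at this
  exact Module.End.mem_eigenspace_iff.mpr this

private lemma pow_eig_apply {V : H →ₗ[ℂ] H} {l : ℂ} {x : H} (h : V x = l • x) (m : ℕ) :
    (V ^ m) x = l ^ m • x := by
  induction m with
  | zero => simp
  | succ m ih =>
    rw [pow_succ, Module.End.mul_apply, h, map_smul, ih, smul_smul, pow_succ]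
    ring_nf

private lemma eig_le_eig_pow (V : H →ₗ[ℂ] H) (l : ℂ) (n : ℕ) :
    Module.End.eigenspace V l ≤ Module.End.eigenspace (V ^ n) (l ^ n) := by
  intro x hx
  exact Module.End.mem_eigenspace_iff.mpr
    (pow_eig_apply (Module.End.mem_eigenspace_iff.mp hx) n)

/-- An eigenvector of `U ^ n` lies in the span of the eigenspaces of `U` whose eigenvalue
is an `n`-th root of `μ`. -/
private lemma eig_pow_le_sup {U : H →ₗ[ℂ] H} (hU : U ∈ unitary (H →ₗ[ℂ] H)) (n : ℕ) (μ : ℂ) :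
    Module.End.eigenspace (U ^ n) μ ≤
      ⨆ (l : ℂ) (_ : l ^ n = μ), Module.End.eigenspace U l := by
  intro v hv
  set T : Submodule ℂ H := ⨆ (l : ℂ) (_ : l ^ n = μ), Module.End.eigenspace U l with hT
  set T' : Submodule ℂ H := ⨆ (l : ℂ) (_ : l ^ n ≠ μ), Module.End.eigenspace U l with hT'
  have htop : T ⊔ T' = ⊤ := by
    rw [eq_top_iff, ← Module.End.iSup_maxGenEigenspace_eq_top U]
    refine iSup_le fun l => ?_
    refine le_trans (unit_gen_le_eig hU l) ?_
    by_cases hl : l ^ n = μ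
    · exact le_sup_of_le_left (le_iSup₂ (f := fun (l : ℂ) (_ : l ^ n = μ) =>
        Module.End.eigenspace U l) l hl)
    · exact le_sup_of_le_right (le_iSup₂ (f := fun (l : ℂ) (_ : l ^ n ≠ μ) =>
        Module.End.eigenspace U l) l hl)
  have hvmem : v ∈ T ⊔ T' := htop ▸ Submodule.mem_top
  obtain ⟨t, ht, t', ht', rfl⟩ := Submodule.mem_sup.mp hvmem
  have hTle : T ≤ Module.End.eigenspace (U ^ n) μ := by
    refine iSup₂_le fun l hl => ?_
    simpa [hl] using eig_le_eig_pow U l n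
  have ht'2 : t' ∈ ⨆ (ν : ℂ) (_ : ν ≠ μ), Module.End.eigenspace (U ^ n) ν := by
    refine (iSup₂_le fun l hl => ?_ : T' ≤ _) ht'
    exact le_trans (eig_le_eig_pow U l n) (le_iSup₂ (f := fun (ν : ℂ) (_ : ν ≠ μ) =>
      Module.End.eigenspace (U ^ n) ν) (l ^ n) hl)
  have hdisj := Module.End.eigenspaces_iSupIndep (U ^ n) μ
  have ht'1 : t' ∈ Module.End.eigenspace (U ^ n) μ := by
    have := sub_mem hv (hTle ht)
    simpa using this
  have ht'0 : t' = 0 := Submodule.disjoint_def.mp hdisj t' ht'1 ht'2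
  rw [ht'0, add_zero]
  exact ht

set_option maxHeartbeats 1000000 in
/-- There is a uniform period `p`: any root-of-unity ratio of eigenvalues of `U`
has order dividing `p`. -/
private lemma exists_period (U : H →ₗ[ℂ] H) :
    ∃ p : ℕ, 0 < p ∧ ∀ l l0 : ℂ, Module.End.eigenspace U l ≠ ⊥ →
      Module.End.eigenspace U l0 ≠ ⊥ →
      ∀ n : ℕ, 0 < n → (l / l0) ^ n = 1 → (l / l0) ^ p = 1 := by
  classical
  have hfin : {l : ℂ | Module.End.eigenspace U l ≠ ⊥}.Finite := by
    refine Set.Finite.subset (Module.End.finite_spectrum U) fun l hl => ?_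
    exact Module.End.hasEigenvalue_iff_mem_spectrum.mp (Module.End.hasEigenvalue_iff.mpr hl)
  obtain ⟨Λ, hΛ⟩ := hfin.exists_finset_coe
  refine ⟨(Λ ×ˢ Λ).lcm (fun q => max 1 (orderOf (q.1 / q.2))), ?_, ?_⟩
  · refine Nat.pos_of_ne_zero fun h => ?_
    rw [Finset.lcm_eq_zero_iff] at h
    obtain ⟨q, -, hq⟩ := h
    simp at hq
  · intro l l0 hl hl0 n hn hr
    have hfo : orderOf (l / l0) ≠ 0 :=
      (IsOfFinOrder.orderOf_pos (isOfFinOrder_iff_pow_eq_one.mpr ⟨n, hn, hr⟩)).ne'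
    have hlm : l ∈ Λ := by rw [← Finset.mem_coe, hΛ]; exact hl
    have hl0m : l0 ∈ Λ := by rw [← Finset.mem_coe, hΛ]; exact hl0
    have hmem : (l, l0) ∈ Λ ×ˢ Λ := Finset.mem_product.mpr ⟨hlm, hl0m⟩
    have h2 : max 1 (orderOf (l / l0)) ∣
        (Λ ×ˢ Λ).lcm (fun q => max 1 (orderOf (q.1 / q.2))) :=
      Finset.dvd_lcm (f := fun q : ℂ × ℂ => max 1 (orderOf (q.1 / q.2))) (b := (l, l0)) hmem
    rw [max_eq_right (Nat.one_le_iff_ne_zero.mpr hfo)] at h2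
    exact orderOf_dvd_iff_pow_eq_one.mp h2

end Aux

/-- For a unitary operator U on a finite-dimensional complex inner product space H,
there exists a positive integer p such that for every subspace K of H, if U^n K = K
for some positive integer n, then U^p K = K. -/
theorem stmt_2 {H : Type*} [NormedAddCommGroup H] [InnerProductSpace ℂ H]
    [FiniteDimensional ℂ H] (U : H →ₗ[ℂ] H) (hU : U ∈ unitary (H →ₗ[ℂ] H)) :
    ∃ p : ℕ, 0 < p ∧ ∀ K : Submodule ℂ H,
      (∃ n : ℕ, 0 < n ∧ Submodule.map (U ^ n) K = K) → Submodule.map (U ^ p) K = K := by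
  classical
  -- eigenvalues of a unitary are nonzero
  have hnz : ∀ l : ℂ, Module.End.eigenspace U l ≠ ⊥ → l ≠ 0 := by
    intro l hl hl0
    rw [hl0, Module.End.eigenspace_zero, LinearMap.ker_eq_bot.mpr (unit_inj hU)] at hl
    exact hl rfl
  obtain ⟨p, hp, hper⟩ := exists_period U
  refine ⟨p, hp, ?_⟩
  rintro K ⟨n, hn, hK⟩
  have hUn : U ^ n ∈ unitary (H →ₗ[ℂ] H) := pow_mem hU n
  have hinvK : ∀ x ∈ K, (U ^ n) x ∈ K := fun x hx => hK ▸ Submodule.mem_map_of_mem hx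
  -- decompose K into generalized eigenspaces of U ^ n
  have hKdecomp : K = ⨆ μ : ℂ, K ⊓ Module.End.genEigenspace (U ^ n) μ ⊤ := by
    have h1 : ⨆ μ : ℂ, Module.End.maxGenEigenspace (LinearMap.restrict (U ^ n) hinvK) μ = ⊤ :=
      Module.End.iSup_maxGenEigenspace_eq_top _
    calc K = Submodule.map K.subtype ⊤ := by rw [Submodule.map_top, Submodule.range_subtype]
      _ = ⨆ μ : ℂ, Submodule.map K.subtype
            (Module.End.maxGenEigenspace (LinearMap.restrict (U ^ n) hinvK) μ) := by
          rw [← h1, Submodule.map_iSup]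
      _ = ⨆ μ : ℂ, K ⊓ Module.End.genEigenspace (U ^ n) μ ⊤ := by
          refine iSup_congr fun μ => ?_
          exact (Submodule.inf_genEigenspace (U ^ n) K hinvK).symm
  rw [hKdecomp, Submodule.map_iSup]
  refine iSup_congr fun μ => ?_
  -- U ^ p acts as a nonzero scalar on each generalized eigenspace of U ^ n
  obtain ⟨c, hc0, hc⟩ : ∃ c : ℂ, c ≠ 0 ∧
      ∀ x ∈ Module.End.genEigenspace (U ^ n) μ ⊤, (U ^ p) x = c • x := by
    by_cases hex : ∃ l : ℂ, l ^ n = μ ∧ Module.End.eigenspace U l ≠ ⊥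
    · obtain ⟨l0, hl0n, hl0⟩ := hex
      have hl00 : l0 ≠ 0 := hnz l0 hl0
      refine ⟨l0 ^ p, pow_ne_zero _ hl00, ?_⟩
      have hle : Module.End.genEigenspace (U ^ n) μ ⊤ ≤
          Module.End.eigenspace (U ^ p) (l0 ^ p) := by
        refine (unit_gen_le_eig hUn μ).trans ((eig_pow_le_sup hU n μ).trans ?_)
        refine iSup₂_le fun l hl => ?_
        by_cases hlb : Module.End.eigenspace U l = ⊥
        · rw [hlb]; exact bot_le
        · have hlp : l ^ p = l0 ^ p := by
            have hμ0 : μ ≠ 0 := hl0n ▸ pow_ne_zero _ hl00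
            have hr : (l / l0) ^ n = 1 := by
              rw [div_pow, hl, hl0n, div_self hμ0]
            have h3 : (l / l0) ^ p = 1 := hper l l0 hlb hl0 n hn hr
            rw [div_pow] at h3
            exact (div_eq_one_iff_eq (pow_ne_zero p hl00)).mp h3
          intro x hx
          rw [Module.End.mem_eigenspace_iff, pow_eig_apply
            (Module.End.mem_eigenspace_iff.mp hx) p, hlp]
      exact fun x hx => Module.End.mem_eigenspace_iff.mp (hle hx)
    · refine ⟨1, one_ne_zero, fun x hx => ?_⟩
      have hbot : Module.End.genEigenspace (U ^ n) μ ⊤ ≤ ⊥ := by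
        refine (unit_gen_le_eig hUn μ).trans ((eig_pow_le_sup hU n μ).trans ?_)
        refine iSup₂_le fun l hl => ?_
        by_cases hlb : Module.End.eigenspace U l = ⊥
        · rw [hlb]
        · exact absurd ⟨l, hl, hlb⟩ hex
      have : x = 0 := Submodule.mem_bot ℂ |>.mp (hbot hx)
      rw [this, map_zero, smul_zero]
  -- conclude: U ^ p maps K ⊓ genEigenspace onto itself
  refine le_antisymm ?_ ?_
  · rintro _ ⟨x, ⟨hxK, hxg⟩, rfl⟩
    rw [hc x hxg]
    exact ⟨K.smul_mem _ hxK, Submodule.smul_mem _ _ hxg⟩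
  · rintro x ⟨hxK, hxg⟩
    refine ⟨c⁻¹ • x, ⟨K.smul_mem _ hxK, Submodule.smul_mem _ _ hxg⟩, ?_⟩
    rw [map_smul, hc x hxg, smul_smul, inv_mul_cancel₀ hc0, one_smul]
end

section
/- Let H be a finite-dimensional complex space, Act a finite set, (U_α) unitaries on H, and F ⊆ H. Define Y_0 = F (assumed a finite union of subspaces) and, while some α ∈ Act has U_α Y_n ≠ Y_n, set Y_{n+1} = U_α^{-1} Y_n ∩ Y_n. Then: (a) each Y_n is a finite union of subspaces; (b) the procedure terminates at some N with U_α Y_N = Y_N for all α; (c) Y_N = { ψ ∈ H : U_s ψ ∈ F for all finite words s }. -/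
open Set Module

namespace Stmt10Aux

variable {H : Type*} [NormedAddCommGroup H] [InnerProductSpace ℂ H] [FiniteDimensional ℂ H]

/-- `A` is a finite union of subspaces. -/
def FUS (A : Set H) : Prop := ∃ s : Finset (Submodule ℂ H), A = ⋃ V ∈ s, (V : Set H)

theorem FUS.inter {A B : Set H} (hA : FUS A) (hB : FUS B) : FUS (A ∩ B) := by
  classical
  obtain ⟨s, rfl⟩ := hA; obtain ⟨t, rfl⟩ := hB
  refine ⟨(s ×ˢ t).image fun p => p.1 ⊓ p.2, ?_⟩
  ext x
  simp only [Set.mem_inter_iff, Set.mem_iUnion, Finset.mem_image, Finset.mem_product,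
    SetLike.mem_coe, Submodule.mem_inf, Prod.exists]
  constructor
  · rintro ⟨⟨V, hV, hx⟩, ⟨W, hW, hx'⟩⟩
    exact ⟨V ⊓ W, ⟨V, W, ⟨hV, hW⟩, rfl⟩, Submodule.mem_inf.mpr ⟨hx, hx'⟩⟩
  · rintro ⟨P, ⟨V, W, ⟨hV, hW⟩, rfl⟩, hx⟩
    rw [Submodule.mem_inf] at hx
    exact ⟨⟨V, hV, hx.1⟩, ⟨W, hW, hx.2⟩⟩

theorem FUS.preimage {A : Set H} (f : H →ₗ[ℂ] H) (hA : FUS A) : FUS (f ⁻¹' A) := by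
  classical
  obtain ⟨s, rfl⟩ := hA
  refine ⟨s.image fun V => V.comap f, ?_⟩
  ext x
  simp only [Set.mem_preimage, Set.mem_iUnion, Finset.mem_image, SetLike.mem_coe,
    Submodule.mem_comap]
  constructor
  · rintro ⟨V, hV, hx⟩; exact ⟨V.comap f, ⟨V, hV, rfl⟩, hx⟩
  · rintro ⟨W, ⟨V, hV, rfl⟩, hx⟩; exact ⟨V, hV, hx⟩

theorem FUS.image {A : Set H} (e : H ≃ₗ[ℂ] H) (hA : FUS A) : FUS (⇑e '' A) := by
  classical
  obtain ⟨s, rfl⟩ := hA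
  refine ⟨s.image fun V => V.map (e : H →ₗ[ℂ] H), ?_⟩
  ext x
  simp only [Set.mem_image, Set.mem_iUnion, Finset.mem_image, SetLike.mem_coe,
    Submodule.mem_map]
  constructor
  · rintro ⟨y, ⟨V, hV, hy⟩, rfl⟩
    exact ⟨V.map (e : H →ₗ[ℂ] H), ⟨V, hV, rfl⟩, ⟨y, hy, rfl⟩⟩
  · rintro ⟨W, ⟨V, hV, rfl⟩, ⟨y, hy, rfl⟩⟩
    exact ⟨y, ⟨V, hV, hy⟩, rfl⟩

/-- Avoidance: a subspace contained in a finite union of subspaces lies in one of them. -/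
theorem le_of_subset_biUnion (V : Submodule ℂ H) (s : Finset (Submodule ℂ H))
    (h : (V : Set H) ⊆ ⋃ W ∈ s, (W : Set H)) : ∃ W ∈ s, V ≤ W := by
  have hcov : ⋃ i : s, (((i : Submodule ℂ H).comap V.subtype : Submodule ℂ V) : Set V)
      = Set.univ := by
    ext x
    simp only [Set.mem_iUnion, Set.mem_univ, iff_true, SetLike.mem_coe, Submodule.mem_comap,
      Submodule.coe_subtype]
    have hx := h x.2
    simp only [Set.mem_iUnion, SetLike.mem_coe] at hx
    obtain ⟨W, hW, hxW⟩ := hx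
    exact ⟨⟨W, hW⟩, hxW⟩
  obtain ⟨i, hi⟩ := Subspace.exists_eq_top_of_iUnion_eq_univ hcov
  exact ⟨i.1, i.2, Submodule.comap_subtype_eq_top.mp hi⟩

/-- Maximal subspaces contained in `A`. -/
def comps (A : Set H) : Set (Submodule ℂ H) :=
  {V | (V : Set H) ⊆ A ∧ ∀ W : Submodule ℂ H, (W : Set H) ⊆ A → V ≤ W → V = W}

theorem comps_mem {A : Set H} {s : Finset (Submodule ℂ H)} (hA : A = ⋃ V ∈ s, (V : Set H))
    {V : Submodule ℂ H} (hV : V ∈ comps A) : V ∈ s := by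
  obtain ⟨W, hW, hle⟩ := le_of_subset_biUnion V s (by rw [← hA]; exact hV.1)
  have hWA : (W : Set H) ⊆ A := by rw [hA]; exact fun x hx => Set.mem_iUnion₂.mpr ⟨W, hW, hx⟩
  have := hV.2 W hWA hle
  rwa [this]

theorem exists_maximal_le {A : Set H} {s : Finset (Submodule ℂ H)}
    (hA : A = ⋃ V ∈ s, (V : Set H))
    {V : Submodule ℂ H} (hV : (V : Set H) ⊆ A) : ∃ W ∈ comps A, V ≤ W := by
  classical
  obtain ⟨W0, hW0, hle0⟩ := le_of_subset_biUnion V s (by rw [← hA]; exact hV)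
  have hne : (s.filter fun W => V ≤ W).Nonempty := ⟨W0, Finset.mem_filter.mpr ⟨hW0, hle0⟩⟩
  obtain ⟨W, hWmem, hWmax⟩ := Finset.exists_max_image (s.filter fun W => V ≤ W) (fun W => finrank ℂ (W : Submodule ℂ H)) hne
  rw [Finset.mem_filter] at hWmem
  refine ⟨W, ⟨by rw [hA]; exact fun x hx => Set.mem_iUnion₂.mpr ⟨W, hWmem.1, hx⟩, ?_⟩, hWmem.2⟩
  intro W' hW' hle
  obtain ⟨W1, hW1, hle1⟩ := le_of_subset_biUnion W' s (by rw [← hA]; exact hW')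
  have h1 : W1 ∈ s.filter fun W => V ≤ W :=
    Finset.mem_filter.mpr ⟨hW1, le_trans hWmem.2 (le_trans hle hle1)⟩
  have h2 : finrank ℂ W1 ≤ finrank ℂ W := hWmax _ h1
  have h3 : W = W1 := Submodule.eq_of_le_of_finrank_le (le_trans hle hle1) h2
  exact le_antisymm hle (h3 ▸ hle1)

theorem eq_biUnion_comps {A : Set H} (hA : FUS A) : A = ⋃ V ∈ comps A, (V : Set H) := by
  obtain ⟨s, hs⟩ := hA
  apply Set.Subset.antisymm
  · intro x hx
    rw [hs] at hx
    simp only [Set.mem_iUnion, SetLike.mem_coe] at hx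
    obtain ⟨V, hVs, hxV⟩ := hx
    have hVA : (V : Set H) ⊆ A := by rw [hs]; exact fun x hx => Set.mem_iUnion₂.mpr ⟨V, hVs, hx⟩
    obtain ⟨W, hW, hle⟩ := exists_maximal_le hs hVA
    exact Set.mem_biUnion hW (hle hxV)
  · intro x hx
    simp only [Set.mem_iUnion, SetLike.mem_coe] at hx
    obtain ⟨V, hV, hxV⟩ := hx
    exact hV.1 hxV

theorem comps_finite {A : Set H} (hA : FUS A) : (comps A).Finite := by
  obtain ⟨s, hs⟩ := hA
  exact s.finite_toSet.subset fun V hV => comps_mem hs hV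

/-- The measure: number of maximal subspaces of each dimension. -/
noncomputable def mu (A : Set H) (d : ℕ) : ℕ := {V ∈ comps A | finrank ℂ V = d}.ncard

theorem mu_descent {A B : Set H} (hA : FUS A) (hB : FUS B) (hAB : A ⊂ B) :
    ∃ d, d ≤ finrank ℂ H ∧ mu A d < mu B d ∧ ∀ e, d < e → mu A e = mu B e := by
  classical
  obtain ⟨t, ht⟩ := hB
  have hfinB : (comps B).Finite := comps_finite ⟨t, ht⟩
  have hXfin : ((comps B) \ (comps A)).Finite := hfinB.subset Set.diff_subset
  have hXne : ((comps B) \ (comps A)).Nonempty := by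
    by_contra hempty
    rw [Set.not_nonempty_iff_eq_empty, Set.diff_eq_empty] at hempty
    have hBA : B ⊆ A := by
      nth_rewrite 1 [eq_biUnion_comps ⟨t, ht⟩]
      exact Set.iUnion₂_subset fun V hV => (hempty hV).1
    exact (Set.ssubset_def.mp hAB).2 hBA
  obtain ⟨V0, hV0, hV0max⟩ := Finset.exists_max_image hXfin.toFinset (fun W => finrank ℂ (W : Submodule ℂ H))
    (Set.Finite.toFinset_nonempty hXfin |>.mpr hXne)
  rw [Set.Finite.mem_toFinset] at hV0
  set d := finrank ℂ (V0 : Submodule ℂ H) with hd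
  have hdb : ∀ V ∈ (comps B) \ (comps A), finrank ℂ V ≤ d := by
    intro V hV
    exact hV0max V (Set.Finite.mem_toFinset hXfin |>.mpr hV)
  -- claim 1 : maximal subspaces of A of dimension ≥ d are maximal in B
  have hclaim1 : ∀ V ∈ comps A, d ≤ finrank ℂ V → V ∈ comps B := by
    intro V hVA hdV
    have hVB : (V : Set H) ⊆ B := hVA.1.trans (Set.ssubset_def.mp hAB).1
    obtain ⟨W, hWB, hle⟩ := exists_maximal_le ht hVB
    by_cases hWA : W ∈ comps A
    · have : V = W := hVA.2 W hWA.1 hle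
      rwa [this]
    · have hWX : W ∈ (comps B) \ (comps A) := ⟨hWB, hWA⟩
      have h1 : finrank ℂ W ≤ d := hdb W hWX
      have h2 : V = W := Submodule.eq_of_le_of_finrank_le hle (h1.trans hdV)
      rw [h2]; exact hWB
  -- claim 2 : maximal subspaces of B of dimension > d are maximal in A
  have hclaim2 : ∀ V ∈ comps B, d < finrank ℂ V → V ∈ comps A := by
    intro V hVB hdV
    by_contra hVA
    exact absurd (hdb V ⟨hVB, hVA⟩) (not_le.mpr hdV)
  refine ⟨d, Submodule.finrank_le V0, ?_, ?_⟩
  · have hsub : {V ∈ comps A | finrank ℂ V = d} ⊂ {V ∈ comps B | finrank ℂ V = d} := by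
      constructor
      · rintro V ⟨hVA, hVd⟩
        exact ⟨hclaim1 V hVA hVd.ge, hVd⟩
      · intro hcon
        have : V0 ∈ {V ∈ comps A | finrank ℂ V = d} := hcon ⟨hV0.1, rfl⟩
        exact hV0.2 this.1
    exact Set.ncard_lt_ncard hsub (hfinB.subset fun V hV => hV.1)
  · intro e he
    have : {V ∈ comps A | finrank ℂ V = e} = {V ∈ comps B | finrank ℂ V = e} := by
      apply Set.Subset.antisymm
      · rintro V ⟨hVA, hVe⟩
        exact ⟨hclaim1 V hVA (hVe ▸ he.le), hVe⟩
      · rintro V ⟨hVB, hVe⟩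
        exact ⟨hclaim2 V hVB (hVe ▸ he), hVe⟩
    rw [mu, mu, this]

theorem no_descent (Z : ℕ → Set H) (hfus : ∀ n, FUS (Z n)) (hZ : ∀ n, Z (n + 1) ⊂ Z n) :
    False := by
  set D := finrank ℂ H with hD
  set v : ℕ → (Fin (D + 1) → ℕ) := fun n i => mu (Z n) (D - (i : ℕ)) with hv
  have hdec : ∀ n, Pi.Lex (· < ·) (@fun _ => (· < ·)) (v (n + 1)) (v n) := by
    intro n
    obtain ⟨d, hdD, hlt, heq⟩ := mu_descent (hfus (n + 1)) (hfus n) (hZ n)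
    refine ⟨⟨D - d, by omega⟩, ?_, ?_⟩
    · intro j hj
      rw [Fin.lt_def] at hj
      simp only [Fin.val_mk] at hj
      have hdj : d < D - (j : ℕ) := by omega
      simp only [hv]
      exact heq _ hdj
    · have h1 : D - (D - d) = d := by omega
      simp only [hv, Fin.val_mk, h1]
      exact hlt
  have hwf : WellFounded (Pi.Lex (· < ·) (@fun _ : Fin (D + 1) => ((· < ·) : ℕ → ℕ → Prop))) :=
    Pi.Lex.wellFounded _ fun _ => Nat.lt_wfRel.wf
  obtain ⟨m, ⟨n, rfl⟩, hmin⟩ := hwf.has_min (Set.range v) ⟨v 0, 0, rfl⟩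
  exact hmin (v (n + 1)) ⟨n + 1, rfl⟩ (hdec n)

theorem image_stable (e : H ≃ₗ[ℂ] H) {A : Set H} (hA : FUS A) (h : ⇑e '' A ⊆ A) :
    ⇑e '' A = A := by
  by_contra hne
  have hss : ⇑e '' A ⊂ A := lt_of_le_of_ne h hne
  set Z : ℕ → Set H := fun k => (Set.image ⇑e)^[k] A with hZ
  have hit : ∀ k, Z (k + 1) = ⇑e '' Z k := fun k => Function.iterate_succ_apply' _ _ _
  have hfus : ∀ k, FUS (Z k) := by
    intro k
    induction k with
    | zero => exact hA
    | succ k ih => rw [hit]; exact FUS.image e ih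
  have hdec : ∀ k, Z (k + 1) ⊂ Z k := by
    intro k
    induction k with
    | zero => rw [hit]; exact hss
    | succ k ih =>
      rw [hit (k + 1), hit k]
      rw [hit k] at ih
      exact (e.injective.injOn.image_ssubset_image_iff (Set.subset_univ _)
        (Set.subset_univ _)).mpr ih
  exact no_descent Z hfus hdec

/-- The unitary as a linear equivalence. -/
noncomputable def unitEquiv (f : H →ₗ[ℂ] H) (hf : f ∈ unitary (H →ₗ[ℂ] H)) : H ≃ₗ[ℂ] H :=
  LinearEquiv.ofLinear f (star f)
    (by rw [← Module.End.mul_eq_comp, (Unitary.mem_iff.mp hf).2]; rfl)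
    (by rw [← Module.End.mul_eq_comp, (Unitary.mem_iff.mp hf).1]; rfl)

theorem unitEquiv_coe (f : H →ₗ[ℂ] H) (hf : f ∈ unitary (H →ₗ[ℂ] H)) :
    ⇑(unitEquiv f hf) = ⇑f := rfl

end Stmt10Aux

open Stmt10Aux in
/-- Correctness of the algorithm computing Y(𝒜, G, f): starting from a finite union of
subspaces F and repeatedly intersecting with preimages under the unitaries while some
U_α does not fix the current set, every stage is a finite union of subspaces, the
procedure stabilizes at an invariant set, and that set is
{ ψ : U_s ψ ∈ F for all finite words s }. -/
theorem stmt_10 {H : Type*} [NormedAddCommGroup H] [InnerProductSpace ℂ H]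
    [FiniteDimensional ℂ H] {Act : Type*} [Fintype Act]
    (U : Act → (H →ₗ[ℂ] H)) (hU : ∀ α, U α ∈ unitary (H →ₗ[ℂ] H))
    (F : Set H) (hF : ∃ s : Finset (Submodule ℂ H), F = ⋃ V ∈ s, (V : Set H))
    (Y : ℕ → Set H) (hY0 : Y 0 = F)
    (hstep : ∀ n : ℕ,
      (∃ α : Act, (U α) '' Y n ≠ Y n ∧ Y (n + 1) = (U α) ⁻¹' (Y n) ∩ Y n) ∨
      ((∀ α : Act, (U α) '' Y n = Y n) ∧ Y (n + 1) = Y n)) :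
    (∀ n : ℕ, ∃ s : Finset (Submodule ℂ H), Y n = ⋃ V ∈ s, (V : Set H)) ∧
    ∃ N : ℕ, (∀ α : Act, (U α) '' Y N = Y N) ∧
      Y N = {ψ : H | ∀ s : List Act, (s.foldl (fun v α => U α v) ψ) ∈ F} := by
  have ha : ∀ n, FUS (Y n) := by
    intro n
    induction n with
    | zero => rw [hY0]; exact hF
    | succ n ih =>
      rcases hstep n with ⟨α, _, h2⟩ | ⟨_, h2⟩
      · rw [h2]; exact FUS.inter (FUS.preimage (U α) ih) ih
      · rwa [h2]
  refine ⟨ha, ?_⟩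
  have hsub : ∀ n, Y (n + 1) ⊆ Y n := by
    intro n
    rcases hstep n with ⟨α, _, h2⟩ | ⟨_, h2⟩
    · rw [h2]; exact Set.inter_subset_right
    · rw [h2]
  have hmono : ∀ m n, m ≤ n → Y n ⊆ Y m := by
    intro m n hmn
    induction n with
    | zero => rw [Nat.le_zero.mp hmn]
    | succ n ih =>
      rcases Nat.lt_or_ge m (n + 1) with h | h
      · exact (hsub n).trans (ih (Nat.lt_succ_iff.mp h))
      · rw [Nat.le_antisymm hmn h]
  have hN : ∃ N, ∀ α : Act, (U α) '' Y N = Y N := by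
    by_contra hc
    push_neg at hc
    have hstrict : ∀ n, Y (n + 1) ⊂ Y n := by
      intro n
      rcases hstep n with ⟨α, hne, h2⟩ | ⟨hfix, _⟩
      · refine lt_of_le_of_ne (hsub n) fun heq => hne ?_
        have hYY : Y n ⊆ (U α) ⁻¹' (Y n) := by
          intro x hx
          have hx' : x ∈ Y (n + 1) := by rw [heq]; exact hx
          rw [h2] at hx'
          exact hx'.1
        have h3 : (U α) '' Y n ⊆ Y n := Set.image_subset_iff.mpr hYY
        have h4 : ⇑(unitEquiv (U α) (hU α)) '' Y n ⊆ Y n := by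
          rwa [unitEquiv_coe]
        have h5 := image_stable (unitEquiv (U α) (hU α)) (ha n) h4
        rwa [unitEquiv_coe] at h5
      · obtain ⟨β, hβ⟩ := hc n
        exact absurd (hfix β) hβ
    exact no_descent Y ha hstrict
  obtain ⟨N, hfix⟩ := hN
  refine ⟨N, hfix, ?_⟩
  have hYF : Y N ⊆ F := hY0 ▸ hmono 0 N (Nat.zero_le N)
  apply Set.Subset.antisymm
  · intro ψ hψ
    intro s
    have key : ∀ (s : List Act) (φ : H), φ ∈ Y N → s.foldl (fun v α => U α v) φ ∈ Y N := by
      intro s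
      induction s with
      | nil => exact fun φ h => h
      | cons α t ih =>
        intro φ h
        rw [List.foldl_cons]
        exact ih _ ((hfix α) ▸ Set.mem_image_of_mem _ h)
    exact hYF (key s ψ hψ)
  · have hT : ∀ n, {ψ : H | ∀ s : List Act, (s.foldl (fun v α => U α v) ψ) ∈ F} ⊆ Y n := by
      intro n
      induction n with
      | zero =>
        rw [hY0]
        intro ψ hψ
        simpa using hψ []
      | succ n ih =>
        rcases hstep n with ⟨α, _, h2⟩ | ⟨_, h2⟩
        · rw [h2]
          intro ψ hψ
          refine ⟨?_, ih hψ⟩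
          apply ih
          intro s
          simpa using hψ (α :: s)
        · rw [h2]; exact ih
    exact hT N
end

section
/- Let H be a finite-dimensional complex space, Act a finite set, (U_α) unitaries, and F ⊆ H a finite union of subspaces. Let Y = { ψ : U_s ψ ∈ F for all words s ∈ Act* }. Suppose U_α Y = Y for all α ∈ Act. Then for any ψ_0 ∈ H: if for every infinite action sequence the orbit of ψ_0 is eventually always in F (ultimately forever reachability), then ψ_0 ∈ Y. -/
/-- If Y = { ψ : U_s ψ ∈ F for all words s } satisfies U_α Y = Y for all α, then any
state whose orbit is eventually always in F along every infinite action sequence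
belongs to Y. -/
theorem stmt_11 {H : Type*} [NormedAddCommGroup H] [InnerProductSpace ℂ H]
    [FiniteDimensional ℂ H] {Act : Type*} [Fintype Act] [Nonempty Act]
    (U : Act → (H →ₗ[ℂ] H)) (hU : ∀ α, U α ∈ unitary (H →ₗ[ℂ] H))
    (F : Set H) (hF : ∃ s : Finset (Submodule ℂ H), F = ⋃ V ∈ s, (V : Set H))
    (Y : Set H) (hY : Y = {ψ : H | ∀ s : List Act, (s.foldl (fun v α => U α v) ψ) ∈ F})
    (hinv : ∀ α : Act, (U α) '' Y = Y)
    (ψ₀ : H)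
    (hUF : ∀ w : ℕ → Act, ∃ N : ℕ, ∀ n ≥ N,
      (((List.range n).map w).foldl (fun v α => U α v) ψ₀) ∈ F) :
    ψ₀ ∈ Y := by
  by_contra hψ
  set f : H → Act → H := fun v α => U α v with hf
  -- injectivity of each U α
  have hinj : ∀ α : Act, Function.Injective (U α) := by
    intro α x y hxy
    have h1 : (star (U α)) * (U α) = 1 := (hU α).1
    have := congrArg (fun z : H => (star (U α)) z) hxy
    simpa [← Module.End.mul_apply, h1] using this
  -- Y-membership invariant under U α
  have hiff : ∀ (α : Act) (ψ : H), U α ψ ∈ Y ↔ ψ ∈ Y := by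
    intro α ψ
    constructor
    · intro h
      rw [← hinv α] at h
      obtain ⟨φ, hφ, hφψ⟩ := h
      rwa [← hinj α hφψ]
    · intro h
      rw [← hinv α]
      exact ⟨ψ, h, rfl⟩
  -- foldl preserves non-membership in Y
  have hfold : ∀ (t : List Act) (ψ : H), t.foldl f ψ ∈ Y ↔ ψ ∈ Y := by
    intro t
    induction t with
    | nil => intro ψ; rfl
    | cons a t ih =>
      intro ψ
      rw [List.foldl_cons, ih (f ψ a)]
      exact hiff a ψ
  -- every word has a bad continuation
  have key : ∀ t : List Act, ∃ s : List Act, ((t ++ s).foldl f ψ₀) ∉ F := by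
    intro t
    have h1 : t.foldl f ψ₀ ∉ Y := fun h => hψ ((hfold t ψ₀).mp h)
    rw [hY] at h1
    simp only [Set.mem_setOf_eq, not_forall] at h1
    obtain ⟨s, hs⟩ := h1
    exact ⟨s, by rwa [List.foldl_append]⟩
  choose g hg using key
  obtain ⟨α₀⟩ := ‹Nonempty Act›
  -- build increasing sequence of words
  let t : ℕ → List Act := fun k => Nat.rec [] (fun _ tk => tk ++ g tk ++ [α₀]) k
  have ht : ∀ k, t (k + 1) = t k ++ g (t k) ++ [α₀] := fun k => rfl
  have hlen : ∀ k, k ≤ (t k).length := by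
    intro k
    induction k with
    | zero => simp
    | succ k ih =>
      rw [ht k]
      simp only [List.length_append, List.length_singleton]
      omega
  have hpre : ∀ j k, j ≤ k → t j <+: t k := by
    intro j k hjk
    induction k with
    | zero => rw [Nat.le_zero.mp hjk]
    | succ k ih =>
      rcases Nat.lt_or_ge j (k + 1) with h | h
      · have := ih (Nat.lt_succ_iff.mp h)
        refine this.trans ?_
        rw [ht k]
        exact ⟨g (t k) ++ [α₀], by simp [List.append_assoc]⟩
      · rw [Nat.le_antisymm hjk h]
  let w : ℕ → Act := fun n => (t (n + 1)).getD n α₀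
  -- w agrees with t k on valid indices
  have hw : ∀ (k n : ℕ), n < (t k).length → w n = (t k).getD n α₀ := by
    intro k n hn
    rcases Nat.le_total (n + 1) k with h | h
    · have hp := hpre (n + 1) k h
      have hn' : n < (t (n + 1)).length := lt_of_lt_of_le (Nat.lt_succ_self n) (hlen (n + 1))
      show (t (n + 1)).getD n α₀ = (t k).getD n α₀
      rw [List.getD_eq_getElem _ _ hn', List.getD_eq_getElem _ _ hn]
      exact hp.getElem hn'
    · have hp := hpre k (n + 1) h
      have hn' : n < (t (n + 1)).length := lt_of_lt_of_le hn hp.length_le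
      show (t (n + 1)).getD n α₀ = (t k).getD n α₀
      rw [List.getD_eq_getElem _ _ hn', List.getD_eq_getElem _ _ hn]
      exact (hp.getElem hn).symm
  -- prefixes of w recover t k ++ g (t k)
  have hmap : ∀ k n, n ≤ (t k).length → (List.range n).map w = (t k).take n := by
    intro k n hn
    apply List.ext_getElem
    · simp [Nat.min_eq_left hn]
    · intro i h1 h2
      simp only [List.getElem_map, List.getElem_range, List.getElem_take]
      have hi : i < (t k).length := by
        simp only [List.length_take] at h2; omega
      rw [hw k i hi, List.getD_eq_getElem _ _ hi]
  obtain ⟨N, hN⟩ := hUF w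
  -- pick k = N, n = length (t N ++ g (t N))
  set n := (t N ++ g (t N)).length with hn
  have hnN : N ≤ n := by
    have := hlen N
    simp only [hn, List.length_append]
    omega
  have hle : n ≤ (t (N + 1)).length := by
    rw [ht N]
    simp only [hn, List.length_append, List.length_singleton]
    omega
  have heq : (List.range n).map w = t N ++ g (t N) := by
    rw [hmap (N + 1) n hle, ht N]
    exact List.take_left' hn.symm
  have := hN n hnN
  rw [heq] at this
  exact hg (t N) this
end

section
/- Let H be a finite-dimensional complex space, Act a finite set, (U_α)_{α∈Act} unitaries, and V_1,…,V_m subspaces with F = V_1 ∪ ⋯ ∪ V_m. Suppose Y_1,…,Y_q are subspaces of H such that (1) for every i and α ∈ Act there exists j with U_α Y_i = Y_j, and (2) every simple loop Y_{r_0} → Y_{r_1} → ⋯ → Y_{r_{k−1}} → Y_{r_0} under the action of the unitaries (with the Y_{r_i} pairwise distinct) contains some Y_{r_i} ⊆ V_j for some j. Then every state ψ_0 ∈ Y_1 ∪ ⋯ ∪ Y_q satisfies: for every infinite action sequence α_0 α_1 ⋯ ∈ Act^ω, the orbit ψ_{n+1} = U_{α_n} ψ_n enters F infinitely often. -/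
/-!
Following the actions, the state ψₙ stays inside a subspace Y_{rₙ}, where r is a walk in the
finite graph whose edges are Y_i → U_α Y_i. By pigeonhole the walk repeats a vertex after any
time N; up to its first repetition it visits distinct vertices, so they form a simple loop.
That loop meets a subspace contained in some V_t, and the state visiting it lies in F.
-/

theorem exists_seq_rel_of_forall_exists {ι β : Type*} {R : ι → β → ι → Prop}
    (h : ∀ i b, ∃ j, R i b j) (i₀ : ι) (w : ℕ → β) :
    ∃ r : ℕ → ι, r 0 = i₀ ∧ ∀ n, R (r n) (w n) (r (n + 1)) := by
  choose next hnext using h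
  exact ⟨fun n => Nat.rec (motive := fun _ => ι) i₀ (fun n i => next i (w n)) n, rfl,
    fun n => hnext _ _⟩

theorem Finite.exists_injOn_Ico_of_apply_eq {α : Type*} [Finite α] (f : ℕ → α) (N : ℕ) :
    ∃ a b, N ≤ a ∧ a < b ∧ f a = f b ∧ Set.InjOn f (Set.Ico a b) := by
  classical
  have hrepeat : ∃ b a, N ≤ a ∧ a < b ∧ f a = f b := by
    obtain ⟨i, j, hne, heq⟩ := Finite.exists_ne_map_eq_of_infinite (fun n => f (N + n))
    rcases hne.lt_or_gt with h | h
    · exact ⟨N + j, N + i, by omega, by omega, heq⟩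
    · exact ⟨N + i, N + j, by omega, by omega, heq.symm⟩
  obtain ⟨a, hNa, hab, hfab⟩ := Nat.find_spec hrepeat
  refine ⟨a, Nat.find hrepeat, hNa, hab, hfab, fun i hi j hj hij => ?_⟩
  by_contra hne
  rcases lt_or_gt_of_ne hne with h | h
  · exact Nat.find_min hrepeat hj.2 ⟨i, hNa.trans hi.1, h, hij⟩
  · exact Nat.find_min hrepeat hi.2 ⟨j, hNa.trans hj.1, h, hij.symm⟩

theorem rel_mod_of_apply_eq {ι β : Type*} {R : ι → β → ι → Prop} {r : ℕ → ι} {w : ℕ → β}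
    (hr : ∀ n, R (r n) (w n) (r (n + 1))) {a b : ℕ} (hab : a < b) (hrep : r a = r b) :
    ∀ i < b - a, R (r (a + i)) (w (a + i)) (r (a + (i + 1) % (b - a))) := by
  intro i hi
  rcases Nat.lt_or_ge (i + 1) (b - a) with h | h
  · rw [Nat.mod_eq_of_lt h, ← add_assoc]
    exact hr (a + i)
  · rw [show i + 1 = b - a by omega, Nat.mod_self, add_zero, hrep, show b = a + i + 1 by omega]
    exact hr (a + i)

theorem List.foldl_map_range_succ {α β : Type*} (f : β → α → α) (w : ℕ → β) (x : α) (n : ℕ) :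
    ((List.range (n + 1)).map w).foldl (fun v a => f a v) x =
      f (w n) (((List.range n).map w).foldl (fun v a => f a v) x) := by
  simp [List.range_succ]

theorem Submodule.foldl_mem_of_map_eq {R M Act ι : Type*} [Semiring R] [AddCommMonoid M]
    [Module R M] {U : Act → M →ₗ[R] M} {Y : ι → Submodule R M} {r : ℕ → ι} {w : ℕ → Act}
    (hr : ∀ n, (Y (r n)).map (U (w n)) = Y (r (n + 1))) {ψ₀ : M} (h₀ : ψ₀ ∈ Y (r 0)) (n : ℕ) :
    ((List.range n).map w).foldl (fun v α => U α v) ψ₀ ∈ Y (r n) := by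
  induction n with
  | zero => exact h₀
  | succ n ih =>
    rw [List.foldl_map_range_succ (fun α v => U α v), ← hr]
    exact Submodule.mem_map_of_mem ih

theorem stmt_15_general {H : Type*} [NormedAddCommGroup H] [InnerProductSpace ℂ H]
    {Act : Type*}
    (U : Act → (H →ₗ[ℂ] H))
    (q m : ℕ) (Y : Fin q → Submodule ℂ H) (V : Fin m → Submodule ℂ H)
    (hclosed : ∀ (i : Fin q) (α : Act), ∃ j : Fin q, Submodule.map (U α) (Y i) = Y j)
    (hloop : ∀ (k : ℕ), 0 < k → ∀ (r : ℕ → Fin q) (β : ℕ → Act),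
      (∀ i < k, Submodule.map (U (β i)) (Y (r i)) = Y (r ((i + 1) % k))) →
      (∀ i < k, ∀ j < k, r i = r j → i = j) →
      ∃ i < k, ∃ t : Fin m, Y (r i) ≤ V t) :
    ∀ ψ₀ : H, (∃ i : Fin q, ψ₀ ∈ Y i) →
      ∀ w : ℕ → Act, ∀ N : ℕ, ∃ n ≥ N, ∃ t : Fin m,
        (((List.range n).map w).foldl (fun v α => U α v) ψ₀) ∈ V t := by
  rintro ψ₀ ⟨i₀, hψ₀⟩ w N
  obtain ⟨r, hr₀, hr⟩ := exists_seq_rel_of_forall_exists hclosed i₀ w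
  obtain ⟨a, b, hNa, hab, hrep, hinj⟩ := Finite.exists_injOn_Ico_of_apply_eq r N
  obtain ⟨i, hi, t, hYV⟩ := hloop (b - a) (by omega) (fun i => r (a + i)) (fun i => w (a + i))
    (rel_mod_of_apply_eq (R := fun i α j => (Y i).map (U α) = Y j) hr hab hrep)
    fun i hi j hj hij => by
      have := hinj (⟨by omega, by omega⟩ : a + i ∈ Set.Ico a b) ⟨by omega, by omega⟩ hij
      omega
  exact ⟨a + i, by omega, t, hYV (Submodule.foldl_mem_of_map_eq hr (hr₀ ▸ hψ₀) _)⟩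

/-- If the subspaces Y_1,…,Y_q are permuted among themselves by the unitaries and every
simple loop of the induced graph passes through a subspace contained in some V_j, then
from every state in ⋃ Y_i, every infinite action sequence enters F = ⋃ V_j infinitely
often. -/
theorem stmt_15 {H : Type*} [NormedAddCommGroup H] [InnerProductSpace ℂ H]
    [FiniteDimensional ℂ H] {Act : Type*} [Fintype Act]
    (U : Act → (H →ₗ[ℂ] H)) (hU : ∀ α, U α ∈ unitary (H →ₗ[ℂ] H))
    (q m : ℕ) (Y : Fin q → Submodule ℂ H) (V : Fin m → Submodule ℂ H)
    (hclosed : ∀ (i : Fin q) (α : Act), ∃ j : Fin q, Submodule.map (U α) (Y i) = Y j)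
    (hloop : ∀ (k : ℕ), 0 < k → ∀ (r : ℕ → Fin q) (β : ℕ → Act),
      (∀ i < k, Submodule.map (U (β i)) (Y (r i)) = Y (r ((i + 1) % k))) →
      (∀ i < k, ∀ j < k, r i = r j → i = j) →
      ∃ i < k, ∃ t : Fin m, Y (r i) ≤ V t) :
    ∀ ψ₀ : H, (∃ i : Fin q, ψ₀ ∈ Y i) →
      ∀ w : ℕ → Act, ∀ N : ℕ, ∃ n ≥ N, ∃ t : Fin m,
        (((List.range n).map w).foldl (fun v α => U α v) ψ₀) ∈ V t :=
  stmt_15_general U q m Y V hclosed hloop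
end
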